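/- The quotient of a torus by any closed subgroup is again a torus: if S is a closed additive subgroup of the k-dimensional torus T^k = (ℝ/ℤ)^k, then there exists a nonnegative integer k' such that the quotient topological group T^k/S is isomorphic as a topological group to the torus T^{k'} = (ℝ/ℤ)^{k'}. -/

import Mathlib

/-!
Lift `S` to the closed subgroup `H = π⁻¹(S)` of `ℝ^k`, where `π : ℝ^k → T^k` is reduction mod 1;
then `T^k ⧸ S ≅ ℝ^k ⧸ H`, and `H ⊇ ℤ^k` spans `ℝ^k`. Let `V` be the largest subspace contained
in `H` and `W` a complement of it. A compactness argument on the unit sphere shows that a closed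
subgroup containing no line is discrete, so `L = H ∩ W` is discrete; since `H = V + L` spans
`ℝ^k`, `L` spans `W`. So `L` is a full lattice in `W`, and the coordinates of the projection to
`W` in a `ℤ`-basis of `L`, taken mod 1, give an open surjection `ℝ^k → T^{k'}` with kernel `H`.
-/

open Filter Topology Module Submodule

section LiftEquiv

variable {G K : Type*} [AddCommGroup G] [TopologicalSpace G] [IsTopologicalAddGroup G]
  [AddCommGroup K] [TopologicalSpace K]

noncomputable def IsOpenQuotientMap.liftEquiv {f : G →+ K}
    (hf : IsOpenQuotientMap f) (N : AddSubgroup G) (hN : N = f.ker) : G ⧸ N ≃ₜ+ K where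
  toAddEquiv := QuotientAddGroup.liftEquiv N hf.surjective hN
  continuous_toFun := (QuotientAddGroup.isQuotientMap_mk N).continuous_iff.mpr hf.continuous
  continuous_invFun := hf.isQuotientMap.continuous_iff.mpr <| by
    convert (QuotientAddGroup.isQuotientMap_mk N).continuous using 1
    ext x
    exact (AddEquiv.symm_apply_eq (QuotientAddGroup.liftEquiv N hf.surjective hN)).mpr rfl

end LiftEquiv

noncomputable def torusProj (ι : Type*) : (ι → ℝ) →+ (ι → AddCircle (1 : ℝ)) :=
  (QuotientAddGroup.mk' _).compLeft ι

theorem isOpenQuotientMap_torusProj (ι : Type*) : IsOpenQuotientMap (torusProj ι) :=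
  IsOpenQuotientMap.piMap fun _ ↦ QuotientAddGroup.isOpenQuotientMap_mk

theorem torusProj_eq_zero_iff {ι : Type*} (x : ι → ℝ) :
    torusProj ι x = 0 ↔ ∀ i, x i ∈ Set.range ((↑) : ℤ → ℝ) := by
  simp [torusProj, funext_iff, AddSubgroup.mem_zmultiples_iff]

theorem span_ker_torusProj (ι : Type*) [Finite ι] :
    span ℝ ((torusProj ι).ker : Set (ι → ℝ)) = ⊤ := by
  classical
  refine top_le_iff.mp <| (Pi.basisFun ℝ ι).span_eq ▸ span_mono (Set.range_subset_iff.mpr ?_)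
  intro i
  rw [SetLike.mem_coe, AddMonoidHom.mem_ker, torusProj_eq_zero_iff, Pi.basisFun_apply]
  intro j
  by_cases hij : j = i
  · subst hij
    exact ⟨1, by simp⟩
  · exact ⟨0, by simp [hij]⟩

namespace AddSubgroup

variable {E : Type*} [NormedAddCommGroup E] [NormedSpace ℝ E] (H : AddSubgroup E)

def linearPart : Submodule ℝ E where
  carrier := {x | ∀ t : ℝ, t • x ∈ H}
  add_mem' hx hy t := by simpa only [smul_add] using H.add_mem (hx t) (hy t)
  zero_mem' t := by simpa only [smul_zero] using H.zero_mem
  smul_mem' c x hx t := by simpa only [smul_smul] using hx (t * c)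

variable {H}

theorem mem_of_mem_linearPart {x : E} (hx : x ∈ H.linearPart) : x ∈ H := by
  simpa using hx 1

theorem mem_linearPart_of_tendsto (hH : IsClosed (H : Set E)) {w : ℕ → E} {u : E}
    (hwH : ∀ n, w n ∈ H) (hw0 : ∀ n, w n ≠ 0) (hw : Tendsto w atTop (𝓝 0))
    (hu : Tendsto (fun n ↦ ‖w n‖⁻¹ • w n) atTop (𝓝 u)) : u ∈ H.linearPart := by
  intro t
  set c : ℕ → ℝ := fun n ↦ ⌊t * ‖w n‖⁻¹⌋ * ‖w n‖
  have hc_eq : ∀ n, c n = t - Int.fract (t * ‖w n‖⁻¹) * ‖w n‖ := fun n ↦ by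
    have : ‖w n‖ ≠ 0 := norm_ne_zero_iff.mpr (hw0 n)
    simp only [c, Int.fract]
    field_simp
    ring
  have hc : Tendsto c atTop (𝓝 t) := by
    have hfract : Tendsto (fun n ↦ Int.fract (t * ‖w n‖⁻¹) * ‖w n‖) atTop (𝓝 0) := by
      refine squeeze_zero_norm (fun n ↦ ?_) (tendsto_zero_iff_norm_tendsto_zero.mp hw)
      rw [norm_mul, Real.norm_of_nonneg (Int.fract_nonneg _), norm_norm]
      exact mul_le_of_le_one_left (norm_nonneg _) (Int.fract_lt_one _).le
    simpa only [sub_zero, ← hc_eq] using tendsto_const_nhds (x := t) |>.sub hfract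
  have hmem : ∀ n, c n • (‖w n‖⁻¹ • w n) ∈ H := fun n ↦ by
    have : ‖w n‖ ≠ 0 := norm_ne_zero_iff.mpr (hw0 n)
    rw [smul_smul, mul_assoc, mul_inv_cancel₀ this, mul_one, Int.cast_smul_eq_zsmul]
    exact H.zsmul_mem (hwH n) _
  exact hH.mem_of_tendsto (hc.smul hu) (Eventually.of_forall hmem)

theorem discreteTopology_of_linearPart_eq_bot [FiniteDimensional ℝ E]
    (hH : IsClosed (H : Set E)) (h : H.linearPart = ⊥) : DiscreteTopology H := by
  refine discreteTopology_of_isOpen_singleton_zero (Metric.isOpen_singleton_iff.mpr ?_)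
  by_contra! hsmall
  choose w hw hw0 using fun n : ℕ ↦ hsmall (1 / (n + 1)) Nat.one_div_pos_of_nat
  have hw_lim : Tendsto (fun n ↦ (w n : E)) atTop (𝓝 0) :=
    tendsto_iff_norm_sub_tendsto_zero.mpr <| squeeze_zero (fun _ ↦ norm_nonneg _)
      (fun n ↦ by simpa using (hw n).le) tendsto_one_div_add_atTop_nhds_zero_nat
  have hw_ne : ∀ n, (w n : E) ≠ 0 := fun n ↦ by simpa using hw0 n
  have hsphere : ∀ n, ‖(w n : E)‖⁻¹ • (w n : E) ∈ Metric.sphere (0 : E) 1 := fun n ↦ by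
    simp [norm_smul, hw_ne n]
  obtain ⟨u, hu, φ, hφ, hlim⟩ := (isCompact_sphere (0 : E) 1).tendsto_subseq hsphere
  have hu_mem : u ∈ H.linearPart :=
    mem_linearPart_of_tendsto hH (fun n ↦ (w (φ n)).2) (fun n ↦ hw_ne (φ n))
      (hw_lim.comp hφ.tendsto_atTop) hlim
  rw [h, Submodule.mem_bot] at hu_mem
  simp [hu_mem] at hu

variable {W : Submodule ℝ E}

theorem linearPart_comap_subtype_eq_bot (hW : Disjoint H.linearPart W) :
    (H.comap (W.subtype : W →+ E)).linearPart = ⊥ := by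
  refine (Submodule.eq_bot_iff _).mpr fun x hx ↦ ?_
  have : (x : E) ∈ H.linearPart ⊓ W := ⟨fun t ↦ hx t, x.2⟩
  simpa [hW.eq_bot] using this

theorem projectionOnto_mem_iff (hW : IsCompl H.linearPart W) (x : E) :
    (W.projectionOnto H.linearPart hW.symm x : E) ∈ H ↔ x ∈ H := by
  have hx := H.linearPart.projection_add_projection_eq_self hW x
  rw [coe_projectionOnto_apply]
  constructor
  · intro h
    rw [← hx]
    exact H.add_mem (mem_of_mem_linearPart (projection_apply_mem _ _)) h
  · intro h
    rw [← sub_eq_of_eq_add' hx.symm]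
    exact H.sub_mem h (mem_of_mem_linearPart (projection_apply_mem _ _))

theorem span_comap_subtype_eq_top (hspan : span ℝ (H : Set E) = ⊤)
    (hW : IsCompl H.linearPart W) : span ℝ (H.comap (W.subtype : W →+ E) : Set W) = ⊤ := by
  set π := W.projectionOnto H.linearPart hW.symm
  have hπ : span ℝ (π '' H) = ⊤ := by
    rw [Submodule.span_image, hspan, Submodule.map_top,
      LinearMap.range_eq_top.mpr (projectionOnto_surjective _)]
  exact top_le_iff.mp <| hπ ▸ span_mono (Set.image_subset_iff.mpr fun x hx ↦
    (projectionOnto_mem_iff hW x).mpr hx)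

end AddSubgroup

theorem Module.Basis.torusProj_ofZLatticeBasis_equivFun_eq_zero_iff {V ι : Type*}
    [NormedAddCommGroup V] [NormedSpace ℝ V] [FiniteDimensional ℝ V] [Fintype ι]
    {L : Submodule ℤ V} [DiscreteTopology L] [IsZLattice ℝ L] (b : Basis ι ℤ L) (w : V) :
    torusProj ι ((b.ofZLatticeBasis ℝ L).equivFun w) = 0 ↔ w ∈ L := by
  conv_rhs => rw [← b.ofZLatticeBasis_span ℝ L]
  rw [Basis.mem_span_iff_repr_mem, torusProj_eq_zero_iff]
  rfl

theorem AddSubgroup.exists_isOpenQuotientMap_torus_ker_eq {E : Type*} [NormedAddCommGroup E]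
    [NormedSpace ℝ E] [FiniteDimensional ℝ E] {H : AddSubgroup E} (hH : IsClosed (H : Set E))
    (hspan : span ℝ (H : Set E) = ⊤) :
    ∃ (n : ℕ) (f : E →+ (Fin n → AddCircle (1 : ℝ))), IsOpenQuotientMap f ∧ f.ker = H := by
  obtain ⟨W, hW⟩ := H.linearPart.exists_isCompl
  let L : Submodule ℤ W := (H.comap (W.subtype : W →+ E)).toIntSubmodule
  have : DiscreteTopology L := discreteTopology_of_linearPart_eq_bot
    (hH.preimage continuous_subtype_val) (linearPart_comap_subtype_eq_bot hW.disjoint)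
  have : IsZLattice ℝ L := ⟨span_comap_subtype_eq_top hspan hW⟩
  let b := (Module.finBasis ℤ L).ofZLatticeBasis ℝ L
  let ℓ := b.equivFun.toLinearMap ∘ₗ W.projectionOnto H.linearPart hW.symm
  have hℓ : Function.Surjective ℓ :=
    b.equivFun.surjective.comp (projectionOnto_surjective _)
  have : IsModuleTopology ℝ E := isModuleTopologyOfFiniteDimensional
  refine ⟨_, (torusProj _).comp ℓ.toAddMonoidHom,
    (isOpenQuotientMap_torusProj _).comp (IsModuleTopology.isOpenQuotientMap_of_surjective hℓ),
    ?_⟩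
  ext x
  rw [AddMonoidHom.mem_ker, AddMonoidHom.comp_apply]
  exact ((Module.finBasis ℤ L).torusProj_ofZLatticeBasis_equivFun_eq_zero_iff _).trans
    (projectionOnto_mem_iff hW x)

/-- **Quotients of tori are tori.**
The quotient of the torus `T^k = (ℝ/ℤ)^k` by any closed subgroup `S` is again a
torus: there is `k'` such that `T^k / S` is isomorphic, as a topological group,
to `(ℝ/ℤ)^{k'}`. -/
theorem quotient_of_torus_by_closed_subgroup_iso_torus
    (k : ℕ) (S : AddSubgroup (Fin k → AddCircle (1 : ℝ)))
    (hS : IsClosed (S : Set (Fin k → AddCircle (1 : ℝ)))) :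
    ∃ (k' : ℕ) (e : (Fin k → AddCircle (1 : ℝ)) ⧸ S ≃+ (Fin k' → AddCircle (1 : ℝ))),
      Continuous e ∧ Continuous e.symm := by
  set H := S.comap (torusProj (Fin k))
  have hH : IsClosed (H : Set (Fin k → ℝ)) :=
    hS.preimage (isOpenQuotientMap_torusProj _).continuous
  have hspan : span ℝ (H : Set (Fin k → ℝ)) = ⊤ :=
    top_le_iff.mp <| span_ker_torusProj (Fin k) ▸ span_mono (AddMonoidHom.ker_le_comap _ S)
  obtain ⟨k', f, hf, hfker⟩ := AddSubgroup.exists_isOpenQuotientMap_torus_ker_eq hH hspan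
  let q := (QuotientAddGroup.mk' S).comp (torusProj (Fin k))
  have hq : IsOpenQuotientMap q :=
    QuotientAddGroup.isOpenQuotientMap_mk.comp (isOpenQuotientMap_torusProj _)
  have hqker : H = q.ker := by
    ext x
    simp [q, H]
  let e := (hq.liftEquiv H hqker).symm.trans (hf.liftEquiv H hfker.symm)
  exact ⟨k', e.toAddEquiv, e.continuous, e.symm.continuous⟩
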